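/- For integers n, m ≥ 3, the set {(i,1) : i ∈ [n]} ∪ {(1,j) : j ∈ [m]} is a dual mutual-visibility set of K_n □ K_m of cardinality n + m − 1. -/

import Mathlib

namespace MutualVisibility

open SimpleGraph

variable {V W : Type*}

/-- `x` and `y` are `X`-visible in `G`: there is a shortest `x,y`-path all of whose
internal vertices avoid `X`. -/
def Visible (G : SimpleGraph V) (X : Set V) (x y : V) : Prop :=
  ∃ p : G.Walk x y, p.length = G.dist x y ∧ ∀ v ∈ p.support, v ≠ x → v ≠ y → v ∉ X

/-- `X` is a mutual-visibility set: any two vertices of `X` are `X`-visible. -/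
def IsMutualVisSet (G : SimpleGraph V) (X : Set V) : Prop :=
  ∀ x ∈ X, ∀ y ∈ X, Visible G X x y

/-- outer mutual-visibility set -/
def IsOuterMutualVisSet (G : SimpleGraph V) (X : Set V) : Prop :=
  IsMutualVisSet G X ∧ ∀ x ∈ X, ∀ y ∉ X, Visible G X x y

/-- dual mutual-visibility set -/
def IsDualMutualVisSet (G : SimpleGraph V) (X : Set V) : Prop :=
  IsMutualVisSet G X ∧ ∀ x ∉ X, ∀ y ∉ X, Visible G X x y

/-- total mutual-visibility set -/
def IsTotalMutualVisSet (G : SimpleGraph V) (X : Set V) : Prop :=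
  ∀ x y : V, Visible G X x y

/-- mutual-visibility number μ(G) -/
noncomputable def mu (G : SimpleGraph V) : ℕ :=
  sSup {k | ∃ X : Set V, IsMutualVisSet G X ∧ X.ncard = k}

/-- outer mutual-visibility number μ_o(G) -/
noncomputable def muOuter (G : SimpleGraph V) : ℕ :=
  sSup {k | ∃ X : Set V, IsOuterMutualVisSet G X ∧ X.ncard = k}

/-- dual mutual-visibility number μ_d(G) -/
noncomputable def muDual (G : SimpleGraph V) : ℕ :=
  sSup {k | ∃ X : Set V, IsDualMutualVisSet G X ∧ X.ncard = k}

/-- total mutual-visibility number μ_t(G) -/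
noncomputable def muTotal (G : SimpleGraph V) : ℕ :=
  sSup {k | ∃ X : Set V, IsTotalMutualVisSet G X ∧ X.ncard = k}

/-- `H` contains a subgraph copy of `F`. -/
def ContainsCopy (F : SimpleGraph W) (H : SimpleGraph V) : Prop :=
  ∃ f : W → V, Function.Injective f ∧ ∀ a b, F.Adj a b → H.Adj (f a) (f b)

/-- The Turán number ex(n; F): max number of edges of an `n`-vertex graph with no copy of `F`. -/
noncomputable def exNum (n : ℕ) (F : SimpleGraph W) : ℕ :=
  sSup {k | ∃ H : SimpleGraph (Fin n), ¬ ContainsCopy F H ∧ H.edgeSet.ncard = k}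

/-- The direct (tensor/categorical) product of graphs. -/
def directProd (G : SimpleGraph V) (H : SimpleGraph W) : SimpleGraph (V × W) where
  Adj x y := G.Adj x.1 y.1 ∧ H.Adj x.2 y.2
  symm := ⟨fun _ _ h => ⟨h.1.symm, h.2.symm⟩⟩
  loopless := ⟨fun x h => G.irrefl h.1⟩

/-- The join `G + H` of two graphs. -/
def graphJoin (G : SimpleGraph V) (H : SimpleGraph W) : SimpleGraph (V ⊕ W) where
  Adj u v := match u, v with
    | Sum.inl a, Sum.inl b => G.Adj a b
    | Sum.inr a, Sum.inr b => H.Adj a b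
    | _, _ => True
  symm := ⟨fun u v => match u, v with
    | Sum.inl _, Sum.inl _ => fun h => G.adj_symm h
    | Sum.inr _, Sum.inr _ => fun h => H.adj_symm h
    | Sum.inl _, Sum.inr _ => fun _ => trivial
    | Sum.inr _, Sum.inl _ => fun _ => trivial⟩
  loopless := ⟨fun u => match u with
    | Sum.inl _ => G.irrefl
    | Sum.inr _ => H.irrefl⟩

/-- A big-μ graph: `G = (K_1 ∪ K_t) + H` for some `t ≥ 0` and some graph `H`. -/
def IsBigMu {V : Type} (G : SimpleGraph V) : Prop :=
  ∃ (t : ℕ) (W : Type) (H : SimpleGraph W),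
    Nonempty (G ≃g graphJoin ((⊤ : SimpleGraph (Fin 1)) ⊕g (⊤ : SimpleGraph (Fin t))) H)

/-- A cograph: a graph with no induced path on four vertices. -/
def IsCograph (G : SimpleGraph V) : Prop :=
  ¬ ∃ f : Fin 4 → V, Function.Injective f ∧
      ∀ a b, (pathGraph 4).Adj a b ↔ G.Adj (f a) (f b)

/-- The Petersen graph, realized as the Kneser graph K(5,2). -/
def petersen : SimpleGraph {s : Finset (Fin 5) // s.card = 2} where
  Adj a b := Disjoint a.1 b.1
  symm := ⟨fun _ _ h => h.symm⟩
  loopless := ⟨by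
    rintro ⟨s, hs⟩ h
    rw [disjoint_self, Finset.bot_eq_empty] at h
    subst h
    simp at hs⟩


/-! Two vertices of `K_n □ K_m` sharing a coordinate are adjacent or equal. Otherwise they are at
distance two, and their common neighbours are the two corners `(x₁, y₂)` and `(y₁, x₂)`. For two
vertices on different arms of the cross one of the corners is off the cross, and for two vertices
off the cross both are. -/

variable {α β : Type*}

section Visible

variable {G : SimpleGraph V} {X : Set V} {x y z : V}

variable (G X) in
lemma visible_refl (x : V) : Visible G X x x :=
  ⟨.nil, by simp, by simp +contextual⟩

lemma Visible.symm (h : Visible G X x y) : Visible G X y x := by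
  obtain ⟨p, hlen, havoid⟩ := h
  exact ⟨p.reverse, by rw [Walk.length_reverse, hlen, SimpleGraph.dist_comm],
    fun v hv hvy hvx => havoid v (by simpa using hv) hvx hvy⟩

variable (X) in
lemma visible_of_adj (h : G.Adj x y) : Visible G X x y :=
  ⟨h.toWalk, by simp [dist_eq_one_iff_adj.mpr h], by simp +contextual⟩

lemma visible_of_commonNeighbor (hne : x ≠ y) (hxy : ¬ G.Adj x y)
    (hxz : G.Adj x z) (hzy : G.Adj z y) (hz : z ∉ X) : Visible G X x y := by
  have hdist : G.dist x y = 2 := by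
    rw [SimpleGraph.dist, edist_eq_two_iff.mpr ⟨hne, hxy, z, hxz, hzy.symm⟩]
    rfl
  refine ⟨.cons hxz (.cons hzy .nil), by simp [hdist], ?_⟩
  simp only [Walk.support_cons, Walk.support_nil, List.mem_cons, List.not_mem_nil, or_false]
  rintro v (rfl | rfl | rfl) hvx hvy
  exacts [absurd rfl hvx, hz, absurd rfl hvy]

end Visible

section RookGraph

variable {X : Set (α × β)} {x y : α × β}

variable (X) in
lemma visible_top_boxProd_of_fst_eq_or_snd_eq (h : x.1 = y.1 ∨ x.2 = y.2) :
    Visible ((⊤ : SimpleGraph α) □ (⊤ : SimpleGraph β)) X x y := by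
  by_cases hxy : x = y
  · exact hxy ▸ visible_refl _ X x
  refine visible_of_adj X (boxProd_adj.mpr ?_)
  rcases h with h | h
  · exact .inr ⟨(top_adj _ _).mpr fun h' => hxy (Prod.ext h h'), h⟩
  · exact .inl ⟨(top_adj _ _).mpr fun h' => hxy (Prod.ext h' h), h⟩

lemma visible_top_boxProd_of_corner_notMem (h : (x.1, y.2) ∉ X) :
    Visible ((⊤ : SimpleGraph α) □ (⊤ : SimpleGraph β)) X x y := by
  by_cases hfs : x.1 = y.1 ∨ x.2 = y.2
  · exact visible_top_boxProd_of_fst_eq_or_snd_eq X hfs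
  push Not at hfs
  obtain ⟨h1, h2⟩ := hfs
  refine visible_of_commonNeighbor (z := (x.1, y.2)) (fun e => h1 (congrArg Prod.fst e)) ?_
    (boxProd_adj.mpr (.inr ⟨(top_adj _ _).mpr h2, rfl⟩))
    (boxProd_adj.mpr (.inl ⟨(top_adj _ _).mpr h1, rfl⟩)) h
  simp [boxProd_adj, h1, h2]

def cross (a : α) (b : β) : Set (α × β) := {p | p.2 = b ∨ p.1 = a}

theorem cross_isDualMutualVisSet (a : α) (b : β) :
    IsDualMutualVisSet ((⊤ : SimpleGraph α) □ (⊤ : SimpleGraph β)) (cross a b) := by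
  constructor
  · rintro x hx y hy
    by_cases hfs : x.1 = y.1 ∨ x.2 = y.2
    · exact visible_top_boxProd_of_fst_eq_or_snd_eq _ hfs
    push Not at hfs
    rcases hx with hx | hx <;> rcases hy with hy | hy
    · exact absurd (hx.trans hy.symm) hfs.2
    · exact visible_top_boxProd_of_corner_notMem
        (by simp [cross, ← hx, ← hy, hfs.1, hfs.2.symm])
    · exact (visible_top_boxProd_of_corner_notMem
        (by simp [cross, ← hx, ← hy, hfs.1.symm, hfs.2])).symm
    · exact absurd (hx.trans hy.symm) hfs.1
  · intro x hx y hy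
    simp only [cross, Set.mem_ofPred_eq, not_or] at hx hy
    exact visible_top_boxProd_of_corner_notMem (by simp [cross, hy.1, hx.2])

theorem ncard_cross [Finite α] [Finite β] (a : α) (b : β) :
    (cross a b).ncard = Nat.card α + Nat.card β - 1 := by
  have hunion : cross a b = (Set.univ ×ˢ {b}) ∪ ({a} ×ˢ Set.univ) := by
    ext p; simp [cross]
  have hinter : (Set.univ ×ˢ {b}) ∩ ({a} ×ˢ Set.univ) = {(a, b)} := by
    ext p; simp [Prod.ext_iff, and_comm]
  have := Set.ncard_union_add_ncard_inter (Set.univ ×ˢ {b} : Set (α × β)) ({a} ×ˢ Set.univ)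
  rw [← hunion, hinter] at this
  simp only [Set.ncard_prod, Set.ncard_univ, Set.ncard_singleton, mul_one, one_mul] at this
  omega

end RookGraph

theorem cross_is_dual_mv_set (n m : ℕ) (hn : 3 ≤ n) (hm : 3 ≤ m) :
    IsDualMutualVisSet ((⊤ : SimpleGraph (Fin n)) □ (⊤ : SimpleGraph (Fin m)))
      {p : Fin n × Fin m | p.2 = ⟨0, by omega⟩ ∨ p.1 = ⟨0, by omega⟩} ∧
    ({p : Fin n × Fin m | p.2 = ⟨0, by omega⟩ ∨ p.1 = ⟨0, by omega⟩} : Set (Fin n × Fin m)).ncard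
      = n + m - 1 :=
  ⟨cross_isDualMutualVisSet _ _,
    by simpa [cross] using ncard_cross (⟨0, by omega⟩ : Fin n) (⟨0, by omega⟩ : Fin m)⟩
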